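/- arXiv:q-alg/9605020 — 10 statements merged into one kernel-verified Lean document; each statement's English description precedes it below -/
import Mathlib

section
/- In U_q(osp(1|2)), the square of the Scasimir satisfies S^2 + 2 = C, where C = q k^2 + q^{-1} k^{-2} + (q-q^{-1})^2 (q k + q^{-1} k^{-1}) f e - (q-q^{-1})^2 (q + 2 + q^{-1}) f^2 e^2. -/
set_option maxHeartbeats 1600000 in
/-- In `U_q(osp(1|2))`, the square of the Scasimir satisfies `S² + 2 = C`,
where `C` is the standard Casimir operator. -/
theorem scasimir_square_eq_casimir
    {A : Type*} [Ring A] [Algebra ℂ A]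
    (q sq : ℂ) (hq0 : q ^ 2 ≠ 0) (hq1 : q ^ 2 ≠ 1) (hsq : sq ^ 2 = q)
    (e f : A) (k : Aˣ)
    (rel1 : (k : A) * e = q • (e * (k : A)))
    (rel2 : (k : A) * f = q⁻¹ • (f * (k : A)))
    (rel3 : e * f + f * e = (q - q⁻¹)⁻¹ • ((k : A) - ((k⁻¹ : Aˣ) : A)))
    (η : ℂ) (hη : η = (sq + sq⁻¹) * (q - q⁻¹))
    (S : A) (hS : S = sq • (k : A) - sq⁻¹ • ((k⁻¹ : Aˣ) : A) - η • (f * e))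
    (C : A) (hC : C = q • ((k : A) ^ 2) + q⁻¹ • (((k⁻¹ : Aˣ) : A) ^ 2)
      + ((q - q⁻¹) ^ 2) • ((q • (k : A) + q⁻¹ • ((k⁻¹ : Aˣ) : A)) * (f * e))
      - ((q - q⁻¹) ^ 2 * (q + 2 + q⁻¹)) • (f ^ 2 * e ^ 2)) :
    S ^ 2 + 2 = C := by
  have hq : q ≠ 0 := fun h => hq0 (by rw [h]; ring)
  have hsq0 : sq ≠ 0 := fun h => hq (by rw [← hsq, h]; ring)
  have hd : q - q⁻¹ ≠ 0 := by
    intro h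
    apply hq1
    have h2 : q * (q - q⁻¹) = 0 := by rw [h, mul_zero]
    have h3 : q * (q - q⁻¹) = q ^ 2 - 1 := by field_simp
    linear_combination h2 - h3
  -- derived relations
  have hkie : ((k⁻¹ : Aˣ) : A) * e = q⁻¹ • (e * ((k⁻¹ : Aˣ) : A)) := by
    have h := congrArg (fun z : A => ((k⁻¹ : Aˣ) : A) * z * ((k⁻¹ : Aˣ) : A)) rel1
    simp only [Units.inv_mul_cancel_left, mul_smul_comm, smul_mul_assoc, mul_assoc,
      Units.mul_inv_cancel_left, Units.mul_inv, mul_one] at h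
    rw [h, smul_smul, inv_mul_cancel₀ hq, one_smul]
  have hkif : ((k⁻¹ : Aˣ) : A) * f = q • (f * ((k⁻¹ : Aˣ) : A)) := by
    have h := congrArg (fun z : A => ((k⁻¹ : Aˣ) : A) * z * ((k⁻¹ : Aˣ) : A)) rel2
    simp only [Units.inv_mul_cancel_left, mul_smul_comm, smul_mul_assoc, mul_assoc,
      Units.mul_inv_cancel_left, Units.mul_inv, mul_one] at h
    rw [h, smul_smul, mul_inv_cancel₀ hq, one_smul]
  -- k and k⁻¹ commute with f*e
  have hk_fe : (k : A) * (f * e) = f * e * (k : A) := by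
    rw [← mul_assoc, rel2, smul_mul_assoc, mul_assoc, rel1, mul_smul_comm, smul_smul,
      inv_mul_cancel₀ hq, one_smul, mul_assoc]
  have hki_fe : ((k⁻¹ : Aˣ) : A) * (f * e) = f * e * ((k⁻¹ : Aˣ) : A) := by
    rw [← mul_assoc, hkif, smul_mul_assoc, mul_assoc, hkie, mul_smul_comm, smul_smul,
      mul_inv_cancel₀ hq, one_smul, mul_assoc]
  -- square of f*e
  have hef : e * f = (q - q⁻¹)⁻¹ • ((k : A) - ((k⁻¹ : Aˣ) : A)) - f * e := by
    rw [← rel3]; noncomm_ring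
  have hfe2 : (f * e) * (f * e)
      = ((q - q⁻¹)⁻¹ * q) • (f * e * (k : A))
        - ((q - q⁻¹)⁻¹ * q⁻¹) • (f * e * ((k⁻¹ : Aˣ) : A))
        - f ^ 2 * e ^ 2 := by
    have h1 : (f * e) * (f * e) = f * (e * f) * e := by noncomm_ring
    rw [h1, hef]
    simp only [mul_sub, sub_mul, mul_smul_comm, smul_mul_assoc, smul_sub]
    rw [mul_assoc f ((k : A)) e, rel1, mul_assoc f (((k⁻¹ : Aˣ) : A)) e, hkie]
    simp only [mul_smul_comm, smul_smul, pow_two, mul_assoc]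
  -- expand S^2
  have expand : S ^ 2
      = (sq * sq) • ((k : A) * (k : A))
        + (sq⁻¹ * sq⁻¹) • (((k⁻¹ : Aˣ) : A) * ((k⁻¹ : Aˣ) : A))
        + (η * η) • ((f * e) * (f * e))
        - (sq * sq⁻¹) • ((k : A) * ((k⁻¹ : Aˣ) : A))
        - (sq⁻¹ * sq) • (((k⁻¹ : Aˣ) : A) * (k : A))
        - (sq * η) • ((k : A) * (f * e)) - (η * sq) • ((f * e) * (k : A))
        + (sq⁻¹ * η) • (((k⁻¹ : Aˣ) : A) * (f * e))
        + (η * sq⁻¹) • ((f * e) * ((k⁻¹ : Aˣ) : A)) := by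
    rw [hS, pow_two]
    simp only [sub_mul, mul_sub, smul_mul_assoc, mul_smul_comm, smul_smul]
    module
  rw [expand, hfe2, hk_fe, hki_fe, Units.mul_inv, Units.inv_mul, hC]
  rw [add_mul, smul_mul_assoc, smul_mul_assoc, hk_fe, hki_fe]
  have h2 : (2 : A) = (2 : ℂ) • (1 : A) := by
    rw [two_smul, ← one_add_one_eq_two]
  rw [h2, pow_two ((k : A)), pow_two (((k⁻¹ : Aˣ) : A))]
  have hst : sq * sq⁻¹ = 1 := mul_inv_cancel₀ hsq0
  have hqu : q * q⁻¹ = 1 := mul_inv_cancel₀ hq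
  have hti : sq⁻¹ ^ 2 = q⁻¹ := by rw [← hsq, inv_pow]
  have hηd : η * (q - q⁻¹)⁻¹ = sq + sq⁻¹ := by
    rw [hη, mul_assoc, mul_inv_cancel₀ hd, mul_one]
  match_scalars
  · linear_combination hsq
  · linear_combination hti
  · linear_combination (η * q) * hηd + ((sq + sq⁻¹) * q - 2 * sq) * hη
      + (q - q⁻¹) * ((q - 2 - sq⁻¹ ^ 2) * hsq + (2 * q - 1 + sq * sq⁻¹) * hst + hqu)
  · linear_combination (-η * q⁻¹) * hηd + (2 * sq⁻¹ - q⁻¹ * (sq + sq⁻¹)) * hη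
      + (q - q⁻¹) * ((2 - q⁻¹) * hti + (2 * (1 - q⁻¹)) * hst - 2 * hqu - q⁻¹ * hsq)
  · linear_combination (-η - (sq + sq⁻¹) * (q - q⁻¹)) * hη
      + (q - q⁻¹) ^ 2 * (-hsq - 2 * hst - hti)
  · linear_combination (-2 : ℂ) * hst
end

section
/- In U_q(osp(1|2)), for every positive integer m, the product ∏_{n=0}^{m-1} (S - q'^n q^{1/2} k + q'^{-n} q^{-1/2} k^{-1}) equals ε(m) (-η)^m f^m e^m, where ε(m) = 1 if m ≡ 0 or 1 mod 4 and ε(m) = -1 otherwise. (The factors in the product commute, being expressions in S, k, k^{-1}.) -/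
/-!
The element `e` anticommutes with `S` and `q`-commutes with `k^{±1}`, so pushing `e^n` through
the `n`-th factor `T_n` turns it into `(-1)^n T_0`, and `T_0 = -η f e`. Hence
`f^n e^n T_n = (-1)^n (-η) f^(n+1) e^(n+1)`, and by induction the product equals
`(-1)^(m(m-1)/2) (-η)^m f^m e^m`, where `(-1)^(m(m-1)/2) = ε(m)`.
-/

theorem prod_range_neg_one_pow {R : Type*} [CommRing R] (m : ℕ) :
    ∏ n ∈ Finset.range m, (-1 : R) ^ n = if m % 4 = 0 ∨ m % 4 = 1 then 1 else -1 := by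
  induction m with
  | zero => simp
  | succ m ih =>
    rw [Finset.prod_range_succ, ih]
    obtain ⟨j, r, hr, rfl⟩ : ∃ j r, r < 4 ∧ m = 4 * j + r :=
      ⟨m / 4, m % 4, Nat.mod_lt _ (by norm_num), (Nat.div_add_mod m 4).symm⟩
    rw [pow_add, pow_mul, show (-1 : R) ^ 4 = 1 by norm_num, one_pow, one_mul]
    interval_cases r <;> norm_num [Nat.add_mod]

section ScalarCommutation

variable {R A : Type*} [CommSemiring R] [Semiring A] [Algebra R A]

theorem pow_mul_eq_smul_mul_pow {a b : A} {c : R} (h : a * b = c • (b * a)) (n : ℕ) :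
    a ^ n * b = c ^ n • (b * a ^ n) := by
  induction n with
  | zero => simp
  | succ n ih =>
    calc a ^ (n + 1) * b = c • (a ^ n * b * a) := by
          rw [pow_succ, mul_assoc, h, mul_smul_comm, mul_assoc]
      _ = c ^ (n + 1) • (b * a ^ (n + 1)) := by
          rw [ih, smul_mul_assoc, smul_smul, ← pow_succ', mul_assoc, ← pow_succ]

theorem mul_eq_inv_smul_mul {K : Type*} [Field K] [Algebra K A] {a b : A} {c : K} (hc : c ≠ 0)
    (h : a * b = c • (b * a)) : b * a = c⁻¹ • (a * b) := by
  rw [h, smul_smul, inv_mul_cancel₀ hc, one_smul]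

theorem mul_inv_eq_smul_inv_mul {u : Aˣ} {a : A} {c : R}
    (h : (u : A) * a = c • (a * u)) : a * ↑u⁻¹ = c • (↑u⁻¹ * a) := by
  calc a * ↑u⁻¹ = ↑u⁻¹ * (u * a) * ↑u⁻¹ := by rw [← mul_assoc, Units.inv_mul, one_mul]
    _ = c • (↑u⁻¹ * a) := by
      rw [h, mul_smul_comm, smul_mul_assoc, mul_assoc, mul_assoc, Units.mul_inv, mul_one]

theorem list_prod_map_range_eq_smul {T : ℕ → A} {c : ℕ → R} {e f : A}
    (h : ∀ n, e ^ n * T n = c n • (f * e ^ (n + 1))) (m : ℕ) :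
    ((List.range m).map T).prod = (∏ n ∈ Finset.range m, c n) • (f ^ m * e ^ m) := by
  induction m with
  | zero => simp
  | succ m ih =>
    rw [List.range_succ, List.map_append, List.prod_append, ih, List.map_singleton,
      List.prod_singleton, smul_mul_assoc, mul_assoc, h, mul_smul_comm, smul_smul,
      Finset.prod_range_succ, ← mul_assoc, ← pow_succ]

end ScalarCommutation

section SCasimir

variable {A : Type*} [Ring A] [Algebra ℂ A] {q sq : ℂ} {e f : A} {k : Aˣ}

noncomputable def sCasimir (q sq : ℂ) (e f : A) (k : Aˣ) : A :=
  sq • (k : A) - sq⁻¹ • ((k⁻¹ : Aˣ) : A) - ((sq + sq⁻¹) * (q - q⁻¹)) • (f * e)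

/-- `η = (sq + sq⁻¹)(q - q⁻¹)` is exactly the coefficient for which the `k` and `k⁻¹` terms
produced by rewriting `e f` through `rel3` cancel. -/
theorem mul_sCasimir_eq_neg_sCasimir_mul (hq : q ≠ 0) (hq1 : q ^ 2 ≠ 1) (hsq : sq ^ 2 = q)
    (rel1 : (k : A) * e = q • (e * (k : A)))
    (rel3 : e * f + f * e = (q - q⁻¹)⁻¹ • ((k : A) - ((k⁻¹ : Aˣ) : A))) :
    e * sCasimir q sq e f k = -(sCasimir q sq e f k * e) := by
  have hsq0 : sq ≠ 0 := by rintro rfl; simp [← hsq] at hq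
  have hqq : q - q⁻¹ ≠ 0 := by
    rw [sub_ne_zero]; intro h; apply hq1; field_simp at h; linear_combination h
  have hef : e * f = (q - q⁻¹)⁻¹ • ((k : A) - ((k⁻¹ : Aˣ) : A)) - f * e :=
    eq_sub_of_add_eq rel3
  simp only [sCasimir, mul_sub, sub_mul, mul_smul_comm, smul_mul_assoc,
    mul_eq_inv_smul_mul hq rel1, mul_inv_eq_smul_inv_mul rel1, ← mul_assoc, hef]
  have hsq_inv : sq * q⁻¹ = sq⁻¹ := by rw [← hsq]; field_simp
  have hinv_sq : sq⁻¹ * q = sq := by rw [← hsq]; field_simp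
  have hη_div : (q - q⁻¹)⁻¹ * ((sq + sq⁻¹) * (q - q⁻¹)) = sq + sq⁻¹ := by
    field_simp
  match_scalars
  · linear_combination hsq_inv - hη_div
  · linear_combination hη_div - hinv_sq
  · ring

theorem pow_mul_sCasimir_factor (hq : q ≠ 0) (hq1 : q ^ 2 ≠ 1) (hsq : sq ^ 2 = q)
    (rel1 : (k : A) * e = q • (e * (k : A)))
    (rel3 : e * f + f * e = (q - q⁻¹)⁻¹ • ((k : A) - ((k⁻¹ : Aˣ) : A))) (n : ℕ) :
    e ^ n * (sCasimir q sq e f k - ((-q) ^ n * sq) • (k : A)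
        + (((-q)⁻¹) ^ n * sq⁻¹) • ((k⁻¹ : Aˣ) : A))
      = ((-1) ^ n * -((sq + sq⁻¹) * (q - q⁻¹))) • (f * e ^ (n + 1)) := by
  have hS : e * sCasimir q sq e f k = (-1 : ℂ) • (sCasimir q sq e f k * e) := by
    rw [mul_sCasimir_eq_neg_sCasimir_mul hq hq1 hsq rel1 rel3, neg_one_smul]
  rw [mul_add, mul_sub, mul_smul_comm, mul_smul_comm,
    pow_mul_eq_smul_mul_pow (mul_eq_inv_smul_mul hq rel1),
    pow_mul_eq_smul_mul_pow (mul_inv_eq_smul_inv_mul rel1), pow_mul_eq_smul_mul_pow hS]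
  simp only [sCasimir, pow_succ', sub_mul, smul_mul_assoc, mul_assoc]
  have hpow : (-q) ^ n * q⁻¹ ^ n = (-1) ^ n := by rw [← mul_pow, neg_mul, mul_inv_cancel₀ hq]
  have hpow_inv : (-q)⁻¹ ^ n * q ^ n = (-1) ^ n := by
    rw [← mul_pow, inv_neg, neg_mul, inv_mul_cancel₀ hq]
  match_scalars
  · linear_combination -sq * hpow
  · linear_combination sq⁻¹ * hpow_inv
  · ring

end SCasimir

theorem scasimir_product_formula_general
    {A : Type*} [Ring A] [Algebra ℂ A]
    (q sq : ℂ) (hq0 : q ^ 2 ≠ 0) (hq1 : q ^ 2 ≠ 1) (hsq : sq ^ 2 = q)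
    (e f : A) (k : Aˣ)
    (rel1 : (k : A) * e = q • (e * (k : A)))
    (rel3 : e * f + f * e = (q - q⁻¹)⁻¹ • ((k : A) - ((k⁻¹ : Aˣ) : A)))
    (η : ℂ) (hη : η = (sq + sq⁻¹) * (q - q⁻¹))
    (S : A) (hS : S = sq • (k : A) - sq⁻¹ • ((k⁻¹ : Aˣ) : A) - η • (f * e)) :
    ∀ m : ℕ, 1 ≤ m →
      ((List.range m).map (fun n =>
          S - ((-q) ^ n * sq) • (k : A) + (((-q)⁻¹) ^ n * sq⁻¹) • ((k⁻¹ : Aˣ) : A))).prod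
        = ((if m % 4 = 0 ∨ m % 4 = 1 then (1 : ℂ) else -1) * (-η) ^ m) • (f ^ m * e ^ m) := by
  intro m _
  have hq : q ≠ 0 := (pow_ne_zero_iff two_ne_zero).mp hq0
  obtain rfl : S = sCasimir q sq e f k := by rw [hS, hη]; rfl
  rw [list_prod_map_range_eq_smul (pow_mul_sCasimir_factor hq hq1 hsq rel1 rel3),
    Finset.prod_mul_distrib, prod_range_neg_one_pow, Finset.prod_const, Finset.card_range, hη]

/-- Kerler-type identity in `U_q(osp(1|2))`:
`∏_{n=0}^{m-1} (S - q'ⁿ q^{1/2} k + q'⁻ⁿ q^{-1/2} k⁻¹) = ε(m) (-η)ᵐ fᵐ eᵐ`,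
where `q' = -q` and `ε(m) = 1` if `m ≡ 0,1 mod 4`, `-1` otherwise.
The factors of the product commute (being expressions in `S, k, k⁻¹`);
the product is taken in the natural order. -/
theorem scasimir_product_formula
    {A : Type*} [Ring A] [Algebra ℂ A]
    (q sq : ℂ) (hq0 : q ^ 2 ≠ 0) (hq1 : q ^ 2 ≠ 1) (hsq : sq ^ 2 = q)
    (e f : A) (k : Aˣ)
    (rel1 : (k : A) * e = q • (e * (k : A)))
    (rel2 : (k : A) * f = q⁻¹ • (f * (k : A)))
    (rel3 : e * f + f * e = (q - q⁻¹)⁻¹ • ((k : A) - ((k⁻¹ : Aˣ) : A)))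
    (η : ℂ) (hη : η = (sq + sq⁻¹) * (q - q⁻¹))
    (S : A) (hS : S = sq • (k : A) - sq⁻¹ • ((k⁻¹ : Aˣ) : A) - η • (f * e)) :
    ∀ m : ℕ, 1 ≤ m →
      ((List.range m).map (fun n =>
          S - ((-q) ^ n * sq) • (k : A) + (((-q)⁻¹) ^ n * sq⁻¹) • ((k⁻¹ : Aˣ) : A))).prod
        = ((if m % 4 = 0 ∨ m % 4 = 1 then (1 : ℂ) else -1) * (-η) ^ m) • (f ^ m * e ^ m) :=
  scasimir_product_formula_general q sq hq0 hq1 hsq e f k rel1 rel3 η hη S hS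
end

section
/- Suppose q is a primitive l-th root of unity with l > 2, and let L be the smallest even multiple of l. Then in U_q(osp(1|2)), f^L e = e f^L, and consequently f^L is central; similarly e^L is central. -/
noncomputable def seqA (c mu : ℂ) : ℕ → ℂ
  | 0 => 0
  | n+1 => c * (-1)^n + mu * seqA c mu n

lemma seqA_closed (c mu : ℂ) (n : ℕ) :
    (1 + mu) * seqA c mu n = c * (-1)^(n+1) * (1 - (-mu)^n) := by
  induction n with
  | zero => simp [seqA]
  | succ n ih =>
    have h : seqA c mu (n+1) = c * (-1)^n + mu * seqA c mu n := rfl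
    rw [h, mul_add, mul_comm (1+mu) (mu * seqA c mu n), mul_assoc, mul_comm (seqA c mu n) (1+mu), ih]
    ring

lemma seqA_vanish (c mu : ℂ) (L : ℕ) (hE : Even L) (hpow : mu ^ L = 1) (hmu : mu ≠ -1) :
    seqA c mu L = 0 := by
  have h := seqA_closed c mu L
  rw [hE.neg_pow, hpow] at h
  have h1 : (1 + mu) ≠ 0 := fun h0 => hmu (by linear_combination h0)
  have h2 : (1 + mu) * seqA c mu L = 0 := by rw [h]; ring
  rcases mul_eq_zero.mp h2 with h3 | h3
  · exact absurd h3 h1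
  · exact h3

section key
variable {A : Type*} [Ring A] [Algebra ℂ A]

lemma upow (mu : ℂ) (u y : A) (hu : u * y = mu • (y * u)) (n : ℕ) :
    u * y ^ n = mu ^ n • (y ^ n * u) := by
  induction n with
  | zero => simp
  | succ n ih =>
    rw [pow_succ, ← mul_assoc, ih, smul_mul_assoc, mul_assoc, hu, mul_smul_comm, smul_smul,
      pow_succ, ← mul_assoc]

lemma key_formula (mu c₁ c₂ : ℂ) (x y u v : A)
    (hu : u * y = mu • (y * u)) (hv : v * y = mu⁻¹ • (y * v))
    (hxy : x * y = c₁ • u + c₂ • v - y * x) (n : ℕ) :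
    x * y ^ (n+1) = ((-1 : ℂ)^(n+1)) • (y^(n+1) * x)
      + seqA c₁ mu (n+1) • (y^n * u) + seqA c₂ mu⁻¹ (n+1) • (y^n * v) := by
  induction n with
  | zero =>
    simp only [zero_add, pow_one, pow_zero, one_mul, seqA]
    rw [hxy]
    module
  | succ n ih =>
    have step : x * y ^ (n+2) = (x * y^(n+1)) * y := by rw [pow_succ, ← mul_assoc]
    rw [step, ih, add_mul, add_mul, smul_mul_assoc, smul_mul_assoc, smul_mul_assoc,
      mul_assoc, mul_assoc, mul_assoc, hxy, hu, hv]
    have hA : seqA c₁ mu (n+2) = c₁ * (-1)^(n+1) + mu * seqA c₁ mu (n+1) := rfl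
    have hB : seqA c₂ mu⁻¹ (n+2) = c₂ * (-1)^(n+1) + mu⁻¹ * seqA c₂ mu⁻¹ (n+1) := rfl
    have e1 : y^n * (y * u) = y^(n+1) * u := by rw [← mul_assoc, ← pow_succ]
    have e2 : y^n * (y * v) = y^(n+1) * v := by rw [← mul_assoc, ← pow_succ]
    have e3 : y^(n+1) * (y * x) = y^(n+2) * x := by rw [← mul_assoc, ← pow_succ]
    rw [mul_sub, mul_add, mul_smul_comm, mul_smul_comm, mul_smul_comm, mul_smul_comm,
      e1, e2, e3, hA, hB]
    module

lemma key (mu c₁ c₂ : ℂ) (x y u v : A)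
    (hu : u * y = mu • (y * u)) (hv : v * y = mu⁻¹ • (y * v))
    (hxy : x * y = c₁ • u + c₂ • v - y * x)
    (L : ℕ) (hLpos : 0 < L) (hE : Even L) (hpow : mu ^ L = 1)
    (hmu0 : mu ≠ 0) (hmu : mu ≠ -1) :
    x * y ^ L = y ^ L * x := by
  obtain ⟨n, rfl⟩ : ∃ n, L = n + 1 := ⟨L - 1, (Nat.succ_pred_eq_of_pos hLpos).symm⟩
  have hinv0 : mu⁻¹ ≠ 0 := inv_ne_zero hmu0
  have hinvpow : mu⁻¹ ^ (n+1) = 1 := by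
    rw [inv_pow, hpow, inv_one]
  have hinvmu : mu⁻¹ ≠ -1 := by
    intro h
    apply hmu
    have := congrArg (·⁻¹) h
    simpa [inv_neg] using this
  rw [key_formula mu c₁ c₂ x y u v hu hv hxy n,
    seqA_vanish c₁ mu (n+1) hE hpow hmu,
    seqA_vanish c₂ mu⁻¹ (n+1) hE hinvpow hinvmu,
    hE.neg_pow]
  simp

end key

lemma inv_rel {A : Type*} [Ring A] [Algebra ℂ A] (mu : ℂ) (hmu : mu ≠ 0) (y : A) (k : Aˣ)
    (h : (k : A) * y = mu • (y * (k : A))) :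
    ((k⁻¹ : Aˣ) : A) * y = mu⁻¹ • (y * ((k⁻¹ : Aˣ) : A)) := by
  have h1 : y * ((k⁻¹ : Aˣ) : A) = mu • (((k⁻¹ : Aˣ) : A) * y) := by
    have := congrArg (fun z => ((k⁻¹ : Aˣ) : A) * z * ((k⁻¹ : Aˣ) : A)) h
    simp only [mul_smul_comm, smul_mul_assoc] at this
    calc y * ((k⁻¹ : Aˣ) : A)
        = ((k⁻¹ : Aˣ) : A) * ((k : A) * y) * ((k⁻¹ : Aˣ) : A) := by
          rw [← mul_assoc, Units.inv_mul, one_mul]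
      _ = mu • (((k⁻¹ : Aˣ) : A) * (y * (k : A)) * ((k⁻¹ : Aˣ) : A)) := this
      _ = mu • (((k⁻¹ : Aˣ) : A) * y) := by
          rw [mul_assoc, mul_assoc, Units.mul_inv, mul_one]
  calc ((k⁻¹ : Aˣ) : A) * y = mu⁻¹ • (mu • (((k⁻¹ : Aˣ) : A) * y)) := by
        rw [smul_smul, inv_mul_cancel₀ hmu, one_smul]
    _ = mu⁻¹ • (y * ((k⁻¹ : Aˣ) : A)) := by rw [← h1]

/-- If `q` is a primitive `l`-th root of unity (`l > 2`) and `L` is the smallest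
even multiple of `l`, then in `U_q(osp(1|2))` one has `f^L e = e f^L`, and `f^L`
and `e^L` are central (they commute with the generators `e`, `f`, `k`). -/
theorem powers_L_are_central
    {A : Type*} [Ring A] [Algebra ℂ A]
    (q : ℂ) (l : ℕ) (hl : 2 < l) (hprim : IsPrimitiveRoot q l)
    (L : ℕ) (hL : L = if Even l then l else 2 * l)
    (e f : A) (k : Aˣ)
    (rel1 : (k : A) * e = q • (e * (k : A)))
    (rel2 : (k : A) * f = q⁻¹ • (f * (k : A)))
    (rel3 : e * f + f * e = (q - q⁻¹)⁻¹ • ((k : A) - ((k⁻¹ : Aˣ) : A))) :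
    f ^ L * e = e * f ^ L ∧
    (Commute (f ^ L) e ∧ Commute (f ^ L) f ∧ Commute (f ^ L) (k : A)) ∧
    (Commute (e ^ L) e ∧ Commute (e ^ L) f ∧ Commute (e ^ L) (k : A)) := by
  set lam : ℂ := (q - q⁻¹)⁻¹ with hlam
  have hq0 : q ≠ 0 := hprim.ne_zero (by omega)
  have hqm1 : q ≠ -1 := by
    intro h
    have h2 : q ^ 2 = 1 := by rw [h]; ring
    have := Nat.le_of_dvd (by norm_num) (hprim.dvd_of_pow_eq_one 2 h2)
    omega
  have hdvd : l ∣ L := by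
    rw [hL]; split_ifs
    · exact dvd_rfl
    · exact dvd_mul_left l 2
  have hE : Even L := by
    rw [hL]; split_ifs with h
    · exact h
    · exact even_two_mul l
  have hLpos : 0 < L := by rw [hL]; split_ifs <;> omega
  have hqL : q ^ L = 1 := by
    obtain ⟨m, rfl⟩ := hdvd
    rw [pow_mul, hprim.pow_eq_one, one_pow]
  have hqi0 : q⁻¹ ≠ 0 := inv_ne_zero hq0
  have hqim1 : q⁻¹ ≠ -1 := by
    intro h
    apply hqm1
    have := congrArg (·⁻¹) h
    simpa [inv_neg] using this
  have hqiL : q⁻¹ ^ L = 1 := by rw [inv_pow, hqL, inv_one]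
  -- relations
  have hvf : ((k⁻¹ : Aˣ) : A) * f = (q⁻¹)⁻¹ • (f * ((k⁻¹ : Aˣ) : A)) :=
    inv_rel q⁻¹ hqi0 f k rel2
  have hve : ((k⁻¹ : Aˣ) : A) * e = q⁻¹ • (e * ((k⁻¹ : Aˣ) : A)) :=
    inv_rel q hq0 e k rel1
  have hxyf : e * f = lam • (k : A) + (-lam) • ((k⁻¹ : Aˣ) : A) - f * e := by
    rw [eq_sub_iff_add_eq, rel3]
    module
  have hxye : f * e = lam • (k : A) + (-lam) • ((k⁻¹ : Aˣ) : A) - e * f := by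
    rw [eq_sub_iff_add_eq, add_comm, rel3]
    module
  have mainf : e * f ^ L = f ^ L * e :=
    key q⁻¹ lam (-lam) e f (k : A) ((k⁻¹ : Aˣ) : A) rel2 hvf hxyf L hLpos hE hqiL hqi0 hqim1
  have maine : f * e ^ L = e ^ L * f := by
    apply key q lam (-lam) f e (k : A) ((k⁻¹ : Aˣ) : A) rel1 _ hxye L hLpos hE hqL hq0 hqm1
    exact hve
  have kf : (k : A) * f ^ L = f ^ L * (k : A) := by
    rw [upow q⁻¹ (k : A) f rel2 L, hqiL, one_smul]
  have ke : (k : A) * e ^ L = e ^ L * (k : A) := by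
    rw [upow q (k : A) e rel1 L, hqL, one_smul]
  refine ⟨mainf.symm, ⟨mainf.symm, (Commute.refl f).pow_left L, kf.symm⟩,
    ⟨((Commute.refl e).pow_left L), maine.symm, ke.symm⟩⟩
end

section
/- Suppose q is a primitive l-th root of unity with l > 2, and let l' be the multiplicative order of q' = -q. Then in U_q(osp(1|2)), f^{l'} e + (-1)^{l'-1} e f^{l'} = 0. -/
/-- If `q` is a primitive `l`-th root of unity (`l > 2`) and `l'` is the
multiplicative order of `q' = -q`, then in `U_q(osp(1|2))` one has
`f^{l'} e + (-1)^{l'-1} e f^{l'} = 0`. -/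
theorem power_lprime_relation
    {A : Type*} [Ring A] [Algebra ℂ A]
    (q : ℂ) (l : ℕ) (hl : 2 < l) (hprim : IsPrimitiveRoot q l)
    (l' : ℕ) (hl' : l' = orderOf (-q))
    (e f : A) (k : Aˣ)
    (rel1 : (k : A) * e = q • (e * (k : A)))
    (rel2 : (k : A) * f = q⁻¹ • (f * (k : A)))
    (rel3 : e * f + f * e = (q - q⁻¹)⁻¹ • ((k : A) - ((k⁻¹ : Aˣ) : A))) :
    f ^ l' * e + ((-1 : ℂ)) ^ (l' - 1) • (e * f ^ l') = 0 := by
  have hq0 : q ≠ 0 := hprim.ne_zero (by omega)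
  have hql : q ^ l = 1 := hprim.pow_eq_one
  have hq1 : (-q) ≠ 1 := by
    intro h
    have h2 : q ^ 2 = 1 := by
      have : q = -1 := by linear_combination -h
      rw [this]; ring
    have := (Nat.le_of_dvd (by norm_num) ((hprim.pow_eq_one_iff_dvd 2).mp h2))
    omega
  have hfin : IsOfFinOrder (-q) := by
    refine isOfFinOrder_iff_pow_eq_one.mpr ⟨2 * l, by omega, ?_⟩
    rw [pow_mul, neg_sq, ← pow_mul, mul_comm 2 l, pow_mul, hql, one_pow]
  have hl'pos : 0 < l' := hl' ▸ hfin.orderOf_pos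
  have hpow : (-q) ^ l' = 1 := by rw [hl']; exact pow_orderOf_eq_one (-q)
  -- k⁻¹ * f = q • (f * k⁻¹)
  have hfk : ((k⁻¹ : Aˣ) : A) * f = q • (f * ((k⁻¹ : Aˣ) : A)) := by
    have h1 : ((k⁻¹ : Aˣ) : A) * ((k : A) * f) * ((k⁻¹ : Aˣ) : A)
        = ((k⁻¹ : Aˣ) : A) * (q⁻¹ • (f * (k : A))) * ((k⁻¹ : Aˣ) : A) := by rw [rel2]
    rw [← mul_assoc, k.inv_mul, one_mul] at h1
    rw [mul_smul_comm, smul_mul_assoc, mul_assoc, mul_assoc, k.mul_inv, mul_one] at h1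
    rw [h1, smul_smul, mul_inv_cancel₀ hq0, one_smul]
  -- powers
  have hKfn : ∀ n : ℕ, (k : A) * f ^ n = (q⁻¹) ^ n • (f ^ n * (k : A)) := by
    intro n
    induction n with
    | zero => simp
    | succ n ih =>
      rw [pow_succ, ← mul_assoc, ih, smul_mul_assoc, mul_assoc, rel2,
        mul_smul_comm, smul_smul, ← pow_succ, ← mul_assoc, ← pow_succ]
  have hK'fn : ∀ n : ℕ, ((k⁻¹ : Aˣ) : A) * f ^ n = q ^ n • (f ^ n * ((k⁻¹ : Aˣ) : A)) := by
    intro n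
    induction n with
    | zero => simp
    | succ n ih =>
      rw [pow_succ, ← mul_assoc, ih, smul_mul_assoc, mul_assoc, hfk,
        mul_smul_comm, smul_smul, ← pow_succ, ← mul_assoc, ← pow_succ]
  have hfe : f * e = (q - q⁻¹)⁻¹ • ((k : A) - ((k⁻¹ : Aˣ) : A)) - e * f := by
    rw [eq_sub_iff_add_eq, add_comm]; exact rel3
  set c : ℂ := (q - q⁻¹)⁻¹ with hc
  have key : ∀ n : ℕ,
      f ^ (n + 1) * e - ((-1 : ℂ)) ^ (n + 1) • (e * f ^ (n + 1))
        = (c * ∑ j ∈ Finset.range (n + 1), (-q⁻¹) ^ j) • (f ^ n * (k : A))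
          - (c * ∑ j ∈ Finset.range (n + 1), (-q) ^ j) • (f ^ n * ((k⁻¹ : Aˣ) : A)) := by
    intro n
    induction n with
    | zero =>
      simp only [zero_add, pow_one, Finset.range_one, Finset.sum_singleton, pow_zero, mul_one]
      simp only [pow_one, pow_zero, one_mul]
      have h0 : f * e - (-1 : ℂ) • (e * f) = e * f + f * e := by module
      rw [h0, rel3]
      module
    | succ n ih =>
      have ih' : f ^ (n + 1) * e = ((-1 : ℂ)) ^ (n + 1) • (e * f ^ (n + 1))
          + ((c * ∑ j ∈ Finset.range (n + 1), (-q⁻¹) ^ j) • (f ^ n * (k : A))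
            - (c * ∑ j ∈ Finset.range (n + 1), (-q) ^ j) • (f ^ n * ((k⁻¹ : Aˣ) : A))) := by
        rw [← ih]; abel
      have hstep : f ^ (n + 1 + 1) * e = f * (f ^ (n + 1) * e) := by
        rw [← mul_assoc, ← pow_succ']
      rw [hstep, ih']
      rw [mul_add, mul_sub, mul_smul_comm, mul_smul_comm, mul_smul_comm,
        ← mul_assoc f e, hfe, sub_mul, smul_mul_assoc, sub_mul, smul_sub,
        hKfn (n + 1), hK'fn (n + 1)]
      rw [Finset.sum_range_succ (fun j => (-q⁻¹) ^ j) (n + 1),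
        Finset.sum_range_succ (fun j => (-q) ^ j) (n + 1)]
      have e1 : f * (f ^ n * (k : A)) = f ^ (n + 1) * (k : A) := by
        rw [← mul_assoc, ← pow_succ']
      have e2 : f * (f ^ n * ((k⁻¹ : Aˣ) : A)) = f ^ (n + 1) * ((k⁻¹ : Aˣ) : A) := by
        rw [← mul_assoc, ← pow_succ']
      have e3 : e * f * f ^ (n + 1) = e * f ^ (n + 1 + 1) := by
        rw [mul_assoc, ← pow_succ']
      rw [e1, e2, e3]
      match_scalars <;> ring
  -- conclude
  have hsum2 : (∑ j ∈ Finset.range l', (-q) ^ j) = 0 := by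
    rw [geom_sum_eq hq1, hpow, sub_self, zero_div]
  have hinv : (-q⁻¹) = (-q)⁻¹ := by rw [neg_inv]
  have hq1' : (-q⁻¹) ≠ 1 := by
    rw [hinv]
    intro h
    exact hq1 (by rw [← inv_inv (-q), h, inv_one])
  have hsum1 : (∑ j ∈ Finset.range l', (-q⁻¹) ^ j) = 0 := by
    rw [geom_sum_eq hq1']
    rw [hinv, inv_pow, hpow, inv_one, sub_self, zero_div]
  have hkey := key (l' - 1)
  rw [Nat.sub_add_cancel hl'pos] at hkey
  rw [hsum1, hsum2, mul_zero, zero_smul, zero_smul, sub_zero] at hkey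
  have hsign : ((-1 : ℂ)) ^ l' = -(-1 : ℂ) ^ (l' - 1) := by
    conv_lhs => rw [← Nat.sub_add_cancel hl'pos, pow_succ]
    ring
  rw [hsign, neg_smul, sub_neg_eq_add] at hkey
  exact hkey
end

section
/- Suppose l is twice an odd integer, q a primitive l-th root of unity, and l' = l/2. Then in U_q(osp(1|2)), the element e^{l'} anticommutes with k, k^{-1}, S and f; and f^{l'} anticommutes with k, k^{-1}, S and e. Consequently, the elements e^{l'} f^{l'} k^{± l'} are central. -/
private noncomputable def aaSeq (q : ℂ) : ℕ → ℂ
  | 0 => 1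
  | n+1 => q⁻¹ * aaSeq q n + (-1)^(n+1)

private lemma aaSeq_closed (q : ℂ) (n : ℕ) :
    aaSeq q n = (-1)^n * ∑ i ∈ Finset.range (n+1), (-q⁻¹)^i := by
  induction n with
  | zero => simp [aaSeq]
  | succ n ih =>
    rw [show aaSeq q (n+1) = q⁻¹ * aaSeq q n + (-1)^(n+1) from rfl, ih, geom_sum_succ (x := -q⁻¹) (n := n+1)]
    ring

private lemma aaSeq_zero (q : ℂ) (n : ℕ) (h1 : -q⁻¹ ≠ 1) (h2 : (-q⁻¹)^(n+1) = 1) :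
    aaSeq q n = 0 := by
  rw [aaSeq_closed, geom_sum_eq h1, h2]
  simp

private lemma pow_qcomm {A : Type*} [Ring A] [Algebra ℂ A] (q : ℂ) (k e : A)
    (h : k * e = q • (e * k)) : ∀ n, k * e ^ n = (q ^ n) • (e ^ n * k) := by
  intro n
  induction n with
  | zero => simp
  | succ n ih =>
    rw [pow_succ, ← mul_assoc, ih, smul_mul_assoc, mul_assoc, h, mul_smul_comm,
      smul_smul, ← mul_assoc, ← pow_succ]

private lemma smul_flip {A : Type*} [Ring A] [Algebra ℂ A] (r : ℂ) (hr : r ≠ 0)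
    (x y : A) (h : x = r • y) : y = r⁻¹ • x := by
  rw [h, smul_smul, inv_mul_cancel₀ hr, one_smul]

private lemma key_comm {A : Type*} [Ring A] [Algebra ℂ A] (c q : ℂ) (e f u v : A)
    (heu : e * u = q⁻¹ • (u * e)) (hev : e * v = q • (v * e))
    (hef : e * f = -(f * e) + c • u - c • v) :
    ∀ n, e ^ (n+1) * f = ((-1:ℂ)^(n+1)) • (f * e^(n+1))
        + (c * aaSeq q n) • (u * e^n) - (c * aaSeq q⁻¹ n) • (v * e^n) := by
  intro n
  induction n with
  | zero =>
    simp only [zero_add, pow_one, pow_zero, mul_one, aaSeq, neg_one_smul]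
    rw [hef]
  | succ n ih =>
    have h2 : e ^ (n+2) * f = e * (e^(n+1) * f) := by
      rw [← mul_assoc, ← pow_succ']
    rw [h2, ih, mul_sub, mul_add, mul_smul_comm, mul_smul_comm, mul_smul_comm,
      ← mul_assoc e f, hef, ← mul_assoc e u, heu, ← mul_assoc e v, hev,
      sub_mul, add_mul, neg_mul, smul_mul_assoc, smul_mul_assoc,
      mul_assoc f e, ← pow_succ', smul_mul_assoc, smul_mul_assoc,
      mul_assoc u, ← pow_succ', mul_assoc v, ← pow_succ',
      show aaSeq q (n+1) = q⁻¹ * aaSeq q n + (-1)^(n+1) from rfl,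
      show aaSeq q⁻¹ (n+1) = (q⁻¹)⁻¹ * aaSeq q⁻¹ n + (-1)^(n+1) from rfl, inv_inv]
    match_scalars <;> ring

private lemma pow_qcomm' {A : Type*} [Ring A] [Algebra ℂ A] (q : ℂ) (k e : A)
    (h : k * e = q • (e * k)) : ∀ n, k ^ n * e = (q ^ n) • (e * k ^ n) := by
  intro n
  induction n with
  | zero => simp
  | succ n ih =>
    rw [pow_succ, mul_assoc, h, mul_smul_comm, ← mul_assoc, ih, smul_mul_assoc,
      smul_smul, mul_assoc, ← pow_succ, ← pow_succ']

private lemma acH1 {A : Type*} [Ring A] (a b c : A) (ha : a * c = c * a)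
    (hb : b * c = -(c * b)) : (a * b) * c = -(c * (a * b)) := by
  rw [mul_assoc, hb, mul_neg, ← mul_assoc, ha, mul_assoc]

private lemma acH2 {A : Type*} [Ring A] (a b c : A) (ha : a * c = -(c * a))
    (hb : b * c = c * b) : (a * b) * c = -(c * (a * b)) := by
  rw [mul_assoc, hb, ← mul_assoc, ha, neg_mul, mul_assoc]

private lemma acH3 {A : Type*} [Ring A] (a b c : A) (ha : a * c = -(c * a))
    (hb : b * c = -(c * b)) : (a * b) * c = c * (a * b) := by
  rw [mul_assoc, hb, mul_neg, ← mul_assoc, ha, neg_mul, neg_neg, mul_assoc]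

/-- If `l = 2m` with `m > 1` odd and `q` is a primitive `l`-th root of unity,
`l' = l/2 = m`, then in `U_q(osp(1|2))` the element `e^{l'}` anticommutes with
`k`, `k⁻¹`, `S`, `f`, and `f^{l'}` anticommutes with `k`, `k⁻¹`, `S`, `e`.
Consequently `e^{l'} f^{l'} k^{±l'}` are central. -/
theorem half_powers_anticommute
    {A : Type*} [Ring A] [Algebra ℂ A]
    (q sq : ℂ) (m : ℕ) (hm : 1 < m) (hodd : Odd m)
    (hprim : IsPrimitiveRoot q (2 * m)) (hsq : sq ^ 2 = q)
    (l' : ℕ) (hl' : l' = m)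
    (e f : A) (k : Aˣ)
    (rel1 : (k : A) * e = q • (e * (k : A)))
    (rel2 : (k : A) * f = q⁻¹ • (f * (k : A)))
    (rel3 : e * f + f * e = (q - q⁻¹)⁻¹ • ((k : A) - ((k⁻¹ : Aˣ) : A)))
    (η : ℂ) (hη : η = (sq + sq⁻¹) * (q - q⁻¹))
    (S : A) (hS : S = sq • (k : A) - sq⁻¹ • ((k⁻¹ : Aˣ) : A) - η • (f * e)) :
    (e ^ l' * (k : A) = -((k : A) * e ^ l') ∧
     e ^ l' * ((k⁻¹ : Aˣ) : A) = -(((k⁻¹ : Aˣ) : A) * e ^ l') ∧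
     e ^ l' * S = -(S * e ^ l') ∧
     e ^ l' * f = -(f * e ^ l')) ∧
    (f ^ l' * (k : A) = -((k : A) * f ^ l') ∧
     f ^ l' * ((k⁻¹ : Aˣ) : A) = -(((k⁻¹ : Aˣ) : A) * f ^ l') ∧
     f ^ l' * S = -(S * f ^ l') ∧
     f ^ l' * e = -(e * f ^ l')) ∧
    (Commute (e ^ l' * f ^ l' * ((k ^ (l' : ℤ) : Aˣ) : A)) e ∧
     Commute (e ^ l' * f ^ l' * ((k ^ (l' : ℤ) : Aˣ) : A)) f ∧
     Commute (e ^ l' * f ^ l' * ((k ^ (l' : ℤ) : Aˣ) : A)) (k : A)) ∧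
    (Commute (e ^ l' * f ^ l' * ((k ^ (-(l' : ℤ)) : Aˣ) : A)) e ∧
     Commute (e ^ l' * f ^ l' * ((k ^ (-(l' : ℤ)) : Aˣ) : A)) f ∧
     Commute (e ^ l' * f ^ l' * ((k ^ (-(l' : ℤ)) : Aˣ) : A)) (k : A)) := by
  subst hl'
  set k' : A := ((k⁻¹ : Aˣ) : A) with hk'def
  set c : ℂ := (q - q⁻¹)⁻¹ with hcdef
  -- scalar facts
  have hq0 : q ≠ 0 := by
    intro h
    have h2 := hprim.pow_eq_one
    rw [h, zero_pow (by omega)] at h2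
    exact zero_ne_one h2
  have hqm : q ^ l' = -1 := by
    have h1 : (q ^ l') ^ 2 = 1 := by
      rw [← pow_mul, mul_comm]
      exact hprim.pow_eq_one
    have h2 : q ^ l' ≠ 1 := hprim.pow_ne_one_of_pos_of_lt (by omega) (by omega)
    rcases sq_eq_one_iff.mp h1 with h | h
    · exact absurd h h2
    · exact h
  have hqne : q ≠ -1 := by
    intro h
    have : q ^ 2 = 1 := by rw [h]; norm_num
    exact hprim.pow_ne_one_of_pos_of_lt (by norm_num) (by omega) this
  have hqim : (q⁻¹) ^ l' = -1 := by
    rw [inv_pow, hqm]; norm_num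
  have haq1 : aaSeq q (l' - 1) = 0 := by
    refine aaSeq_zero q (l' - 1) ?_ ?_
    · intro h
      apply hqne
      have h2 : q⁻¹ = -1 := neg_eq_iff_eq_neg.mp h
      rw [← inv_inv q, h2]; norm_num
    · rw [show l' - 1 + 1 = l' from by omega, neg_pow, hqim, hodd.neg_one_pow]
      norm_num
  have haq2 : aaSeq q⁻¹ (l' - 1) = 0 := by
    refine aaSeq_zero q⁻¹ (l' - 1) ?_ ?_
    · rw [inv_inv]
      intro h
      exact hqne (neg_eq_iff_eq_neg.mp h)
    · rw [inv_inv, show l' - 1 + 1 = l' from by omega, neg_pow, hqm, hodd.neg_one_pow]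
      norm_num
  -- derived relations
  have hinv1 : (k : A) * k' = 1 := Units.mul_inv k
  have hinv2 : k' * (k : A) = 1 := Units.inv_mul k
  have hek : e * (k : A) = q⁻¹ • ((k : A) * e) := smul_flip q hq0 _ _ rel1
  have hfk : f * (k : A) = q • ((k : A) * f) := by
    have h := smul_flip q⁻¹ (inv_ne_zero hq0) _ _ rel2
    rwa [inv_inv] at h
  have hek' : e * k' = q • (k' * e) := by
    calc e * k' = k' * ((k : A) * e) * k' := by
          rw [← mul_assoc, hinv2, one_mul]
      _ = k' * (q • (e * (k : A))) * k' := by rw [rel1]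
      _ = q • (k' * e * ((k : A) * k')) := by
          rw [mul_smul_comm, smul_mul_assoc, mul_assoc, mul_assoc, mul_assoc]
      _ = q • (k' * e) := by rw [hinv1, mul_one]
  have hfk' : f * k' = q⁻¹ • (k' * f) := by
    calc f * k' = k' * ((k : A) * f) * k' := by
          rw [← mul_assoc, hinv2, one_mul]
      _ = k' * (q⁻¹ • (f * (k : A))) * k' := by rw [rel2]
      _ = q⁻¹ • (k' * f * ((k : A) * k')) := by
          rw [mul_smul_comm, smul_mul_assoc, mul_assoc, mul_assoc, mul_assoc]
      _ = q⁻¹ • (k' * f) := by rw [hinv1, mul_one]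
  have hk'e : k' * e = q⁻¹ • (e * k') := by
    have h := smul_flip q hq0 _ _ hek'
    exact h
  have hk'f : k' * f = q • (f * k') := by
    have h := smul_flip q⁻¹ (inv_ne_zero hq0) _ _ hfk'
    rwa [inv_inv] at h
  -- e^l' anticommutations with k, k'
  have hEk : e ^ l' * (k : A) = -((k : A) * e ^ l') := by
    have h := pow_qcomm q (k : A) e rel1 l'
    rw [hqm, neg_one_smul] at h
    rw [h, neg_neg]
  have hEk' : e ^ l' * k' = -(k' * e ^ l') := by
    have h := pow_qcomm q⁻¹ k' e hk'e l'
    rw [hqim, neg_one_smul] at h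
    rw [h, neg_neg]
  have hFk : f ^ l' * (k : A) = -((k : A) * f ^ l') := by
    have h := pow_qcomm q⁻¹ (k : A) f rel2 l'
    rw [hqim, neg_one_smul] at h
    rw [h, neg_neg]
  have hFk' : f ^ l' * k' = -(k' * f ^ l') := by
    have h := pow_qcomm q k' f hk'f l'
    rw [hqm, neg_one_smul] at h
    rw [h, neg_neg]
  -- e^l' anticommutes with f
  have hm1 : l' - 1 + 1 = l' := by omega
  have hefr : e * f = -(f * e) + c • (k : A) - c • k' := by
    have h1 : e * f = c • ((k : A) - k') - f * e := eq_sub_of_add_eq rel3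
    rw [h1, smul_sub]
    abel
  have hEf : e ^ l' * f = -(f * e ^ l') := by
    have h := key_comm c q e f (k : A) k' hek hek' hefr (l' - 1)
    rw [hm1, haq1, haq2] at h
    simpa [hodd.neg_one_pow] using h
  -- f^l' anticommutes with e
  have hfer : f * e = -(e * f) + (-c) • k' - (-c) • (k : A) := by
    have h1 : f * e = c • ((k : A) - k') - e * f :=
      eq_sub_of_add_eq (by rw [add_comm]; exact rel3)
    rw [h1, smul_sub]
    module
  have hFe : f ^ l' * e = -(e * f ^ l') := by
    have h := key_comm (-c) q f e k' (k : A) hfk' hfk hfer (l' - 1)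
    rw [hm1, haq1, haq2] at h
    simpa [hodd.neg_one_pow] using h
  -- S anticommutations
  have hEfe : e ^ l' * (f * e) = -((f * e) * e ^ l') := by
    calc e ^ l' * (f * e) = (e ^ l' * f) * e := (mul_assoc _ _ _).symm
      _ = (-(f * e ^ l')) * e := by rw [hEf]
      _ = -((f * e) * e ^ l') := by
          rw [neg_mul, mul_assoc, ← pow_succ, pow_succ', ← mul_assoc]
  have hFfe : f ^ l' * (f * e) = -((f * e) * f ^ l') := by
    calc f ^ l' * (f * e) = ((f ^ l' * f) * e) := (mul_assoc _ _ _).symm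
      _ = (f * f ^ l') * e := by rw [← pow_succ, pow_succ']
      _ = f * (f ^ l' * e) := mul_assoc _ _ _
      _ = f * (-(e * f ^ l')) := by rw [hFe]
      _ = -((f * e) * f ^ l') := by rw [mul_neg, ← mul_assoc]
  have hES : e ^ l' * S = -(S * e ^ l') := by
    rw [hS]
    simp only [mul_sub, sub_mul, mul_smul_comm, smul_mul_assoc]
    rw [hEk, hEk', hEfe]
    module
  have hFS : f ^ l' * S = -(S * f ^ l') := by
    rw [hS]
    simp only [mul_sub, sub_mul, mul_smul_comm, smul_mul_assoc]
    rw [hFk, hFk', hFfe]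
    module
  -- centrality
  have hKval : ((k ^ (l' : ℤ) : Aˣ) : A) = (k : A) ^ l' := by
    rw [zpow_natCast]
    exact Units.val_pow_eq_pow_val k l'
  have hKval' : ((k ^ (-(l' : ℤ)) : Aˣ) : A) = k' ^ l' := by
    rw [zpow_neg, zpow_natCast, ← inv_pow]
    exact Units.val_pow_eq_pow_val k⁻¹ l'
  have hKe : (k : A) ^ l' * e = -(e * (k : A) ^ l') := by
    have h := pow_qcomm' q (k : A) e rel1 l'
    rw [hqm, neg_one_smul] at h
    exact h
  have hKf : (k : A) ^ l' * f = -(f * (k : A) ^ l') := by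
    have h := pow_qcomm' q⁻¹ (k : A) f rel2 l'
    rw [hqim, neg_one_smul] at h
    exact h
  have hK'e : k' ^ l' * e = -(e * k' ^ l') := by
    have h := pow_qcomm' q⁻¹ k' e hk'e l'
    rw [hqim, neg_one_smul] at h
    exact h
  have hK'f : k' ^ l' * f = -(f * k' ^ l') := by
    have h := pow_qcomm' q k' f hk'f l'
    rw [hqm, neg_one_smul] at h
    exact h
  have hPe : (e ^ l' * f ^ l') * e = -(e * (e ^ l' * f ^ l')) :=
    acH1 _ _ _ (by rw [← pow_succ, pow_succ']) hFe
  have hPf : (e ^ l' * f ^ l') * f = -(f * (e ^ l' * f ^ l')) :=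
    acH2 _ _ _ hEf (by rw [← pow_succ, pow_succ'])
  have hPk : (e ^ l' * f ^ l') * (k : A) = (k : A) * (e ^ l' * f ^ l') :=
    acH3 _ _ _ hEk hFk
  have hKk : (k : A) ^ l' * (k : A) = (k : A) * (k : A) ^ l' :=
    ((Commute.refl ((k : A))).pow_left l')
  have hK'k : k' ^ l' * (k : A) = (k : A) * k' ^ l' := by
    have hc : Commute k' (k : A) := by
      unfold Commute SemiconjBy
      rw [hinv2, hinv1]
    exact (hc.pow_left l')
  refine ⟨⟨hEk, hEk', hES, hEf⟩, ⟨hFk, hFk', hFS, hFe⟩, ⟨?_, ?_, ?_⟩, ⟨?_, ?_, ?_⟩⟩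
  · show _ * e = e * _
    rw [hKval]
    exact acH3 _ _ _ hPe hKe
  · show _ * f = f * _
    rw [hKval]
    exact acH3 _ _ _ hPf hKf
  · show _ * (k : A) = (k : A) * _
    rw [hKval]
    exact Commute.mul_left hPk hKk
  · show _ * e = e * _
    rw [hKval']
    exact acH3 _ _ _ hPe hK'e
  · show _ * f = f * _
    rw [hKval']
    exact acH3 _ _ _ hPf hK'f
  · show _ * (k : A) = (k : A) * _
    rw [hKval']
    exact Commute.mul_left hPk hK'k
end

section
/- Define polynomials P_m by P_0 = 2, P_1 = S, P_{m+1} = S P_m + P_{m-1}, and Q_m by Q_0 = 2, Q_1 = C, Q_{m+1} = C Q_m - Q_{m-1}. Then P_{2m}(S) = Q_m(S^2 + 2) for all m ≥ 0. -/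
/-- `P₀ = 2`, `P₁ = X`, `P_{m+1} = X P_m + P_{m-1}`. -/
noncomputable def Pcheb : ℕ → Polynomial ℤ
  | 0 => 2
  | 1 => Polynomial.X
  | (m + 2) => Polynomial.X * Pcheb (m + 1) + Pcheb m

/-- `Q₀ = 2`, `Q₁ = X`, `Q_{m+1} = X Q_m - Q_{m-1}`. -/
noncomputable def Qcheb : ℕ → Polynomial ℤ
  | 0 => 2
  | 1 => Polynomial.X
  | (m + 2) => Polynomial.X * Qcheb (m + 1) - Qcheb m

lemma Pcheb_key (n : ℕ) :
    Pcheb (n + 4) = (Polynomial.X ^ 2 + 2) * Pcheb (n + 2) - Pcheb n := by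
  show Polynomial.X * Pcheb (n + 3) + Pcheb (n + 2) = _
  have h3 : Pcheb (n + 3) = Polynomial.X * Pcheb (n + 2) + Pcheb (n + 1) := rfl
  have h2 : Pcheb (n + 2) = Polynomial.X * Pcheb (n + 1) + Pcheb n := rfl
  rw [h3]
  linear_combination -h2

/-- `P_{2m}(S) = Q_m(S² + 2)` as a polynomial identity. -/
theorem Pcheb_even_eq_Qcheb_comp (m : ℕ) :
    Pcheb (2 * m) = (Qcheb m).comp (Polynomial.X ^ 2 + 2) := by
  induction m using Nat.twoStepInduction with
  | zero => simp [Pcheb, Qcheb]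
  | one => simp [Pcheb, Qcheb]; ring
  | more n ih1 ih2 =>
    have : 2 * (n + 2) = 2 * n + 4 := by ring
    rw [show 2 * (n + 1) = 2 * n + 2 from by ring] at ih2
    rw [this, Pcheb_key, ih1, ih2, show Qcheb (n + 2) =
      Polynomial.X * Qcheb (n + 1) - Qcheb n from rfl]
    simp [Polynomial.sub_comp, Polynomial.mul_comp, Polynomial.X_comp]
end

section
/- With P_m and Q_m defined by the recursions P_0 = Q_0 = 2, P_1 = Q_1 = X, P_{m+1} = X P_m + P_{m-1}, Q_{m+1} = X Q_m - Q_{m-1}, one has Q_m(X^2+2) = P_m(X)^2 + 2(-1)^{m+1} for all m ≥ 0. -/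
open Polynomial in
lemma Pcheb_aux (m : ℕ) :
    X * Pcheb (m + 1) * Pcheb m + (Pcheb m) ^ 2 - (Pcheb (m + 1)) ^ 2
      = C ((-1 : ℤ) ^ m) * (X ^ 2 + 4) := by
  induction m with
  | zero => simp [Pcheb]; ring
  | succ n ih =>
    have h2 : Pcheb (n + 2) = X * Pcheb (n + 1) + Pcheb n := rfl
    rw [h2]
    simp only [pow_succ, map_mul, map_pow, map_neg, map_one] at ih ⊢
    linear_combination (-1 : Polynomial ℤ) * ih

open Polynomial in
/-- `Q_m(X² + 2) = P_m(X)² + 2(-1)^{m+1}`. -/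
theorem Qcheb_comp_eq_Pcheb_sq (m : ℕ) :
    (Qcheb m).comp (Polynomial.X ^ 2 + 2)
      = (Pcheb m) ^ 2 + Polynomial.C (2 * (-1 : ℤ) ^ (m + 1)) := by
  induction m using Nat.twoStepInduction with
  | zero => simp [Qcheb, Pcheb]; ring
  | one => simp [Qcheb, Pcheb]
  | more n ih1 ih2 =>
    have hQ : Qcheb (n + 2) = X * Qcheb (n + 1) - Qcheb n := rfl
    have hP : Pcheb (n + 2) = X * Pcheb (n + 1) + Pcheb n := rfl
    have aux := Pcheb_aux n
    rw [hQ, hP, sub_comp, mul_comp, X_comp, ih1, ih2]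
    simp only [pow_succ, pow_zero, one_mul, map_mul, map_pow, map_neg, map_one, map_ofNat] at aux ih1 ih2 ⊢
    linear_combination (-2 : Polynomial ℤ) * aux
end

section
/- With P_m defined by P_0 = 2, P_1 = X, P_{m+1} = X P_m + P_{m-1}, the polynomial P_{2m+1}(X) is divisible by X, and the quotients R_m(Y) := P_{2m+1}(X)/X evaluated at Y = X^2+2 satisfy the generating function ∑_{m≥0} t^m R_m(Y) = (1+t)/(1 - tY + t^2). -/
/-!
Since `X² + 2` is the trace of the square of a root of `t² - X t - 1`, the odd-indexed
`P_{2m+1}` satisfy `P_{2m+5} = (X² + 2) P_{2m+3} - P_{2m+1}`. Hence they are `X` times the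
substitution `Y = X² + 2` into the sequence `R₀ = 1`, `R₁ = Y + 1`, `R_{m+2} = Y R_{m+1} - R_m`,
and any sequence obeying `f_{m+2} = a f_{m+1} - f_m` has generating function
`(f₀ + (f₁ - a f₀) t) / (1 - a t + t²)`.
-/

open Polynomial in
noncomputable def Rcheb : ℕ → ℤ[X]
  | 0 => 1
  | 1 => X + 1
  | (m + 2) => X * Rcheb (m + 1) - Rcheb m

open Polynomial in
theorem Pcheb_add_four (n : ℕ) : Pcheb (n + 4) = (X ^ 2 + 2) * Pcheb (n + 2) - Pcheb n := by
  simp only [Pcheb]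
  ring

open Polynomial in
theorem Pcheb_two_mul_add_one (m : ℕ) : Pcheb (2 * m + 1) = X * (Rcheb m).comp (X ^ 2 + 2) := by
  induction m using Nat.twoStepInduction with
  | zero => simp [Pcheb, Rcheb]
  | one =>
    simp only [Pcheb, Rcheb, add_comp, X_comp, one_comp]
    ring
  | more m ih₀ ih₁ =>
    rw [show 2 * (m + 2) + 1 = 2 * m + 1 + 4 by ring, Pcheb_add_four,
      show 2 * m + 1 + 2 = 2 * (m + 1) + 1 by ring, ih₀, ih₁]
    simp only [Rcheb, sub_comp, mul_comp, X_comp]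
    ring

open PowerSeries in
theorem PowerSeries.one_sub_X_mul_C_add_X_sq_mul_mk {R : Type*} [CommRing R] (a : R)
    (f : ℕ → R) (hf : ∀ n, f (n + 2) = a * f (n + 1) - f n) :
    (1 - X * C a + X ^ 2) * mk f = C (f 0) + X * C (f 1 - a * f 0) := by
  ext (_ | _ | n) <;> simp [sub_mul, add_mul, mul_assoc, coeff_X_pow_mul', hf]

/-- `P_{2m+1}(X)` is divisible by `X`, and the quotients `R_m`, characterized by
`X · R_m(X² + 2) = P_{2m+1}(X)`, have generating function
`∑ tᵐ R_m(Y) = (1 + t)/(1 - tY + t²)`. -/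
theorem Rcheb_exists_and_generating_function :
    ∃ R : ℕ → Polynomial ℤ,
      (∀ m : ℕ, Pcheb (2 * m + 1)
          = Polynomial.X * (R m).comp (Polynomial.X ^ 2 + 2)) ∧
      (1 - PowerSeries.X * PowerSeries.C (R := Polynomial ℤ) Polynomial.X
          + PowerSeries.X ^ 2) * PowerSeries.mk (fun m => R m)
        = 1 + PowerSeries.X := by
  refine ⟨Rcheb, Pcheb_two_mul_add_one, ?_⟩
  rw [PowerSeries.one_sub_X_mul_C_add_X_sq_mul_mk _ Rcheb fun _ => rfl]
  simp [Rcheb]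
end

section
/- Let q' be a primitive l'-th root of unity and u, v commuting invertible elements of a commutative ring. Then ∏_{n=0}^{l'-1} (u - u^{-1} - q'^n v + q'^{-n} v^{-1}) = u^{l'} + (-u^{-1})^{l'} - v^{l'} - (-v^{-1})^{l'}. -/
/-!
Since `ζ⁻ⁿ` is the inverse of `ζⁿ`, each factor splits as `(u - ζⁿ v) (1 + ζ⁻ⁿ u⁻¹ v⁻¹)`.
Both products are then instances of `∏ᵢ (x - ζⁱ y) = xˡ - yˡ`, which is `∏ᵢ (X - ζⁱ) = Xˡ - 1`
evaluated at `x y⁻¹` and scaled by `yˡ`; for the second product `ζ⁻¹` is again primitive.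
-/

open Finset Polynomial

theorem IsPrimitiveRoot.prod_range_X_sub_C_pow {K : Type*} [CommRing K] [IsDomain K] {ζ : K}
    {n : ℕ} (h : IsPrimitiveRoot ζ n) (hpos : 0 < n) :
    ∏ i ∈ range n, (X - C (ζ ^ i)) = X ^ n - 1 := by
  have hmonic : (X ^ n - C 1 : K[X]).Monic := monic_X_pow_sub_C 1 hpos.ne'
  have hroots : (X ^ n - C 1 : K[X]).roots = (Multiset.range n).map (ζ ^ ·) := by
    simpa [nthRoots] using h.nthRoots_eq (one_pow n)
  have hcard : Multiset.card (X ^ n - C 1 : K[X]).roots = (X ^ n - C 1 : K[X]).natDegree := by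
    rw [hroots, Multiset.card_map, Multiset.card_range, natDegree_X_pow_sub_C]
  calc ∏ i ∈ range n, (X - C (ζ ^ i))
      = ((X ^ n - C 1 : K[X]).roots.map fun a ↦ X - C a).prod := by
        rw [hroots, Multiset.map_map]; rfl
    _ = X ^ n - 1 := by rw [prod_multiset_X_sub_C_of_monic_of_roots_card_eq hmonic hcard, C_1]

theorem IsPrimitiveRoot.prod_range_sub_algebraMap_pow_mul {K A : Type*} [CommRing K] [IsDomain K]
    [CommRing A] [Algebra K A] {ζ : K} {n : ℕ} (h : IsPrimitiveRoot ζ n) (hpos : 0 < n)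
    (x : A) (y : Aˣ) :
    ∏ i ∈ range n, (x - algebraMap K A (ζ ^ i) * y) = x ^ n - (y : A) ^ n := by
  have hroots := congrArg (aeval (x * ↑y⁻¹)) (h.prod_range_X_sub_C_pow hpos)
  simp only [map_prod, map_sub, aeval_X, aeval_C, aeval_X_pow, map_one] at hroots
  have hfactor : ∀ i, x - algebraMap K A (ζ ^ i) * y = (x * ↑y⁻¹ - algebraMap K A (ζ ^ i)) * y :=
    fun i ↦ by rw [sub_mul, mul_assoc, Units.inv_mul, mul_one]
  rw [prod_congr rfl fun i _ ↦ hfactor i, prod_mul_distrib, hroots, prod_const, card_range,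
    sub_mul, one_mul, mul_pow, mul_assoc, ← mul_pow, Units.inv_mul, one_pow, mul_one]

theorem Units.sub_inv_sub_mul_add_mul_inv {A : Type*} [CommRing A] (a b : Aˣ) {c c' : A}
    (hc : c * c' = 1) :
    (a : A) - ↑a⁻¹ - c * b + c' * ↑b⁻¹ = (a - c * b) * (1 - c' * ↑(-(a * b)⁻¹)) := by
  have ha : (a : A) * ↑a⁻¹ = 1 := a.mul_inv
  have hb : (b : A) * ↑b⁻¹ = 1 := b.mul_inv
  rw [Units.val_neg, _root_.mul_inv, Units.val_mul]
  linear_combination (-(c' * ↑b⁻¹)) * ha + ↑a⁻¹ * hb + ↑a⁻¹ * ↑b * ↑b⁻¹ * hc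

/-- If `q'` is a primitive `l'`-th root of unity and `u, v` are invertible
elements of a commutative ℂ-algebra, then
`∏_{n=0}^{l'-1} (u - u⁻¹ - q'ⁿ v + q'⁻ⁿ v⁻¹)
  = u^{l'} + (-u⁻¹)^{l'} - v^{l'} - (-v⁻¹)^{l'}`. -/
theorem product_of_shifted_factors
    {R : Type*} [CommRing R] [Algebra ℂ R]
    (l' : ℕ) (hl' : 1 ≤ l') (q' : ℂ) (hq' : IsPrimitiveRoot q' l')
    (u v : Rˣ) :
    ∏ n ∈ Finset.range l',
        ((u : R) - ((u⁻¹ : Rˣ) : R) - (q' ^ n) • (v : R)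
          + ((q'⁻¹) ^ n) • ((v⁻¹ : Rˣ) : R))
      = ((u ^ l' : Rˣ) : R) + (-((u⁻¹ : Rˣ) : R)) ^ l'
        - ((v ^ l' : Rˣ) : R) - (-((v⁻¹ : Rˣ) : R)) ^ l' := by
  have hq'0 : q' ≠ 0 := hq'.ne_zero (by omega)
  have hfactor : ∀ n, (u : R) - ((u⁻¹ : Rˣ) : R) - (q' ^ n) • (v : R)
      + ((q'⁻¹) ^ n) • ((v⁻¹ : Rˣ) : R) = ((u : R) - algebraMap ℂ R (q' ^ n) * v)
        * (1 - algebraMap ℂ R ((q'⁻¹) ^ n) * ↑(-(u * v)⁻¹)) := fun n ↦ by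
    rw [Algebra.smul_def, Algebra.smul_def]
    exact u.sub_inv_sub_mul_add_mul_inv v
      (by rw [← map_mul, ← mul_pow, mul_inv_cancel₀ hq'0, one_pow, map_one])
  rw [prod_congr rfl fun n _ ↦ hfactor n, prod_mul_distrib,
    hq'.prod_range_sub_algebraMap_pow_mul hl' _ v, hq'.inv.prod_range_sub_algebraMap_pow_mul hl']
  have hu : (u : R) ^ l' * ((u⁻¹ : Rˣ) : R) ^ l' = 1 := by rw [← mul_pow, u.mul_inv, one_pow]
  have hv : (v : R) ^ l' * ((v⁻¹ : Rˣ) : R) ^ l' = 1 := by rw [← mul_pow, v.mul_inv, one_pow]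
  simp only [Units.val_pow_eq_pow_val, Units.val_neg, mul_inv, Units.val_mul, one_pow]
  linear_combination (-(-1 : R) ^ l' * ((v⁻¹ : Rˣ) : R) ^ l') * hu
    + ((-1 : R) ^ l' * ((u⁻¹ : Rˣ) : R) ^ l') * hv
end

section
/- Let q be a primitive l-th root of unity, l > 2, L the smallest even multiple of l. Let V be an L-dimensional vector space with basis |0⟩,…,|L-1⟩ (indices mod L), and define Q|m⟩ = q^{-m}|m⟩, U|m⟩ = (-1)^m |m⟩, P|m⟩ = |m+1⟩. For nonzero complex λ, φ and complex σ, the assignments k = λQ, f = φP, e = (1/(ηφ)) P^{-1} (q^{1/2} λ Q - q^{-1/2} λ^{-1} Q^{-1} - σU) define a representation of U_q(osp(1|2)) on V (i.e. the defining relations are satisfied). -/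
open Matrix

/-- `Q|m⟩ = q^{-m}|m⟩`. -/
noncomputable def Qmat (q : ℂ) (L : ℕ) : Matrix (Fin L) (Fin L) ℂ :=
  Matrix.diagonal fun m => (q⁻¹) ^ (m : ℕ)

/-- `Q⁻¹|m⟩ = q^{m}|m⟩`. -/
noncomputable def QmatInv (q : ℂ) (L : ℕ) : Matrix (Fin L) (Fin L) ℂ :=
  Matrix.diagonal fun m => q ^ (m : ℕ)

/-- `U|m⟩ = (-1)^m|m⟩`. -/
noncomputable def Umat (L : ℕ) : Matrix (Fin L) (Fin L) ℂ :=
  Matrix.diagonal fun m => (-1 : ℂ) ^ (m : ℕ)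

/-- Cyclic shift `P|m⟩ = |m+1⟩` (indices mod `L`). -/
def Pmat (L : ℕ) [NeZero L] : Matrix (Fin L) (Fin L) ℂ :=
  Matrix.of fun i j => if i = j + 1 then 1 else 0

/-- Inverse cyclic shift `P⁻¹|m⟩ = |m-1⟩` (indices mod `L`). -/
def PmatInv (L : ℕ) [NeZero L] : Matrix (Fin L) (Fin L) ℂ :=
  Matrix.of fun i j => if j = i + 1 then 1 else 0

lemma condP {L : ℕ} [NeZero L] (i x : Fin L) : (i = x + 1) = (x = i - 1) :=
  propext ⟨fun h => by subst h; simp, fun h => by subst h; simp⟩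

lemma PP (L : ℕ) [NeZero L] : Pmat L * PmatInv L = 1 := by
  ext i j
  simp only [Matrix.mul_apply, Pmat, PmatInv, Matrix.of_apply, condP, ite_mul, one_mul, zero_mul,
    Finset.sum_ite_eq', Finset.mem_univ, if_true, Matrix.one_apply]
  simp only [sub_left_inj]

lemma PPinv (L : ℕ) [NeZero L] : PmatInv L * Pmat L = 1 := by
  ext i j
  simp only [Matrix.mul_apply, Pmat, PmatInv, Matrix.of_apply, ite_mul, one_mul, zero_mul,
    Finset.sum_ite_eq', Finset.mem_univ, if_true, Matrix.one_apply]
  simp only [add_left_inj]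

lemma diagP {L : ℕ} [NeZero L] (d : Fin L → ℂ) :
    Matrix.diagonal d * Pmat L = Pmat L * Matrix.diagonal (fun m => d (m + 1)) := by
  ext i j
  simp only [Matrix.mul_apply, Pmat, Matrix.of_apply, Matrix.diagonal_apply, ite_mul,
    mul_ite, one_mul, zero_mul, mul_one, mul_zero, Finset.sum_ite_eq, Finset.sum_ite_eq',
    Finset.mem_univ, if_true]
  split_ifs with h
  · rw [h]
  · rfl

lemma PinvDiag {L : ℕ} [NeZero L] (d : Fin L → ℂ) :
    PmatInv L * Matrix.diagonal d = Matrix.diagonal (fun m => d (m + 1)) * PmatInv L := by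
  ext i j
  simp only [Matrix.mul_apply, PmatInv, Matrix.of_apply, Matrix.diagonal_apply, condP, ite_mul,
    mul_ite, one_mul, zero_mul, mul_one, mul_zero, Finset.sum_ite_eq, Finset.sum_ite_eq',
    Finset.mem_univ, if_true]
  split_ifs with h
  · rw [show j = i + 1 from by rw [h]; simp]
  · rfl

lemma diagConst {L : ℕ} (c : ℂ) (d : Fin L → ℂ) :
    Matrix.diagonal (fun m => c * d m) = c • Matrix.diagonal d := by
  ext i j
  by_cases h : i = j <;> simp [Matrix.diagonal_apply, h]

lemma powShift {L : ℕ} [NeZero L] (hL : 1 < L) (a : ℂ) (ha : a ^ L = 1) (m : Fin L) :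
    a ^ (((m + 1) : Fin L) : ℕ) = a * a ^ (m : ℕ) := by
  have h1 : (((m + 1) : Fin L) : ℕ) = ((m : ℕ) + 1) % L := by
    simp [Fin.val_add, Nat.add_mod, Nat.mod_eq_of_lt hL]
  rw [h1, ← pow_eq_pow_mod _ ha, pow_succ, mul_comm]

/-- For `q` a primitive `l`-th root of unity (`l > 2`), `L` the smallest even
multiple of `l`, and nonzero `λ, φ`, the operators `k = λQ`, `f = φP`,
`e = (ηφ)⁻¹ P⁻¹ (q^{1/2}λQ - q^{-1/2}λ⁻¹Q⁻¹ - σU)` on the `L`-dimensional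
space satisfy the defining relations of `U_q(osp(1|2))`
(this is the periodic module `M₊(λ,φ,σ)`). -/
theorem periodic_module_Mplus_is_representation
    (q sq : ℂ) (l : ℕ) (hl : 2 < l) (hprim : IsPrimitiveRoot q l) (hsq : sq ^ 2 = q)
    (L : ℕ) [NeZero L] (hL : L = if Even l then l else 2 * l)
    (lam phi sigma : ℂ) (hlam : lam ≠ 0) (hphi : phi ≠ 0)
    (η : ℂ) (hη : η = (sq + sq⁻¹) * (q - q⁻¹))
    (kM kMinv fM eM : Matrix (Fin L) (Fin L) ℂ)
    (hk : kM = lam • Qmat q L)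
    (hkinv : kMinv = lam⁻¹ • QmatInv q L)
    (hf : fM = phi • Pmat L)
    (he : eM = (η * phi)⁻¹ •
      (PmatInv L * ((sq * lam) • Qmat q L - (sq⁻¹ * lam⁻¹) • QmatInv q L
        - sigma • Umat L))) :
    kM * kMinv = 1 ∧ kMinv * kM = 1 ∧
    kM * eM = q • (eM * kM) ∧
    kM * fM = q⁻¹ • (fM * kM) ∧
    eM * fM + fM * eM = (q - q⁻¹)⁻¹ • (kM - kMinv) := by
  -- basic nonvanishing facts
  have hl0 : l ≠ 0 := by omega
  have hq0 : q ≠ 0 := hprim.ne_zero hl0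
  have hsq0 : sq ≠ 0 := fun h => hq0 (by rw [← hsq, h]; ring)
  have hq2 : q ^ 2 ≠ 1 := by
    intro h
    have := Nat.le_of_dvd (by norm_num) ((hprim.pow_eq_one_iff_dvd 2).mp h)
    omega
  have hqq : q - q⁻¹ ≠ 0 := by
    intro h
    apply hq2
    have h2 : q = q⁻¹ := by linear_combination h
    calc q ^ 2 = q * q := pow_two q
    _ = q * q⁻¹ := by rw [← h2]
    _ = 1 := mul_inv_cancel₀ hq0
  have hss : sq + sq⁻¹ ≠ 0 := by
    intro h
    apply hq2
    have h2 : sq = -sq⁻¹ := by linear_combination h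
    have h3 : q = -1 := by
      calc q = sq * sq := by rw [← hsq]; ring
      _ = sq * (-sq⁻¹) := by rw [← h2]
      _ = -1 := by rw [mul_neg, mul_inv_cancel₀ hsq0]
    rw [h3]; ring
  have hη0 : η ≠ 0 := by rw [hη]; exact mul_ne_zero hss hqq
  have hL1 : 1 < L := by
    rcases em (Even l) with h | h <;> simp [hL, h] <;> omega
  have hLl : l ∣ L := by
    rcases em (Even l) with h | h <;> simp [hL, h]
  have hqL : q ^ L = 1 := by
    obtain ⟨c, rfl⟩ := hLl
    rw [pow_mul, hprim.pow_eq_one, one_pow]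
  have hqiL : (q⁻¹) ^ L = 1 := by rw [inv_pow, hqL, inv_one]
  have hLeven : Even L := by
    rcases em (Even l) with h | h
    · rwa [hL, if_pos h]
    · rw [hL, if_neg h]; exact even_two_mul l
  have hn1L : ((-1 : ℂ)) ^ L = 1 := hLeven.neg_one_pow
  -- diagonal functions
  set dQ : Fin L → ℂ := fun m => (q⁻¹) ^ (m : ℕ) with hdQ
  set dQi : Fin L → ℂ := fun m => q ^ (m : ℕ) with hdQi
  set d : Fin L → ℂ := fun m =>
    sq * lam * (q⁻¹) ^ (m : ℕ) - sq⁻¹ * lam⁻¹ * q ^ (m : ℕ) - sigma * (-1 : ℂ) ^ (m : ℕ)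
    with hd
  have hQ : Qmat q L = Matrix.diagonal dQ := rfl
  have hQi : QmatInv q L = Matrix.diagonal dQi := rfl
  have hD : (sq * lam) • Qmat q L - (sq⁻¹ * lam⁻¹) • QmatInv q L - sigma • Umat L
      = Matrix.diagonal d := by
    ext i j
    simp only [Matrix.sub_apply, Matrix.smul_apply, Qmat, QmatInv, Umat, Matrix.diagonal_apply,
      smul_eq_mul, hd]
    split_ifs with h
    · ring
    · ring
  have he' : eM = (η * phi)⁻¹ • (PmatInv L * Matrix.diagonal d) := by rw [he, hD]
  -- shift identities
  have hdQshift : (fun m : Fin L => dQ (m + 1)) = fun m => q⁻¹ * dQ m := by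
    funext m; exact powShift hL1 q⁻¹ hqiL m
  -- commutation relations
  have hQPinv : Matrix.diagonal dQ * PmatInv L = q • (PmatInv L * Matrix.diagonal dQ) := by
    have h1 : PmatInv L * Matrix.diagonal dQ = q⁻¹ • (Matrix.diagonal dQ * PmatInv L) := by
      rw [PinvDiag, hdQshift, diagConst, smul_mul_assoc]
    rw [h1, smul_smul, mul_inv_cancel₀ hq0, one_smul]
  have hQP : Matrix.diagonal dQ * Pmat L = q⁻¹ • (Pmat L * Matrix.diagonal dQ) := by
    rw [diagP, hdQshift, diagConst, mul_smul_comm]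
  refine ⟨?_, ?_, ?_, ?_, ?_⟩
  · rw [hk, hkinv, smul_mul_assoc, Matrix.mul_smul, smul_smul, mul_inv_cancel₀ hlam,
      hQ, hQi, Matrix.diagonal_mul_diagonal, one_smul, ← Matrix.diagonal_one]
    funext m
    simp only [hdQ, hdQi, ← mul_pow, inv_mul_cancel₀ hq0, one_pow, Pi.one_apply]
  · rw [hk, hkinv, smul_mul_assoc, Matrix.mul_smul, smul_smul, inv_mul_cancel₀ hlam,
      hQ, hQi, Matrix.diagonal_mul_diagonal, one_smul, ← Matrix.diagonal_one]
    funext m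
    simp only [hdQ, hdQi, ← mul_pow, mul_inv_cancel₀ hq0, one_pow, Pi.one_apply]
  · rw [hk, he', hQ]
    calc (lam • Matrix.diagonal dQ) * ((η * phi)⁻¹ • (PmatInv L * Matrix.diagonal d))
        = (lam * (η * phi)⁻¹) • (Matrix.diagonal dQ * PmatInv L * Matrix.diagonal d) := by
          rw [smul_mul_assoc, Matrix.mul_smul, smul_smul, Matrix.mul_assoc]
      _ = (lam * (η * phi)⁻¹) • ((q • (PmatInv L * Matrix.diagonal dQ)) * Matrix.diagonal d) := by
          rw [hQPinv]
      _ = (q * (lam * (η * phi)⁻¹)) • (PmatInv L * (Matrix.diagonal dQ * Matrix.diagonal d)) := by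
          rw [smul_mul_assoc, smul_smul, mul_comm (lam * (η * phi)⁻¹) q, Matrix.mul_assoc]
      _ = (q * (lam * (η * phi)⁻¹)) • (PmatInv L * (Matrix.diagonal d * Matrix.diagonal dQ)) := by
          rw [Matrix.diagonal_mul_diagonal, Matrix.diagonal_mul_diagonal]
          have : (fun i : Fin L => dQ i * d i) = fun i => d i * dQ i := by funext i; ring
          rw [this]
      _ = q • ((η * phi)⁻¹ • (PmatInv L * Matrix.diagonal d) * (lam • Matrix.diagonal dQ)) := by
          rw [smul_mul_assoc, Matrix.mul_smul, smul_smul, smul_smul, ← Matrix.mul_assoc]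
          ring_nf
  · rw [hk, hf, hQ]
    calc (lam • Matrix.diagonal dQ) * (phi • Pmat L)
        = (lam * phi) • (Matrix.diagonal dQ * Pmat L) := by
          rw [smul_mul_assoc, Matrix.mul_smul, smul_smul]
      _ = (lam * phi) • (q⁻¹ • (Pmat L * Matrix.diagonal dQ)) := by rw [hQP]
      _ = q⁻¹ • ((phi • Pmat L) * (lam • Matrix.diagonal dQ)) := by
          rw [smul_mul_assoc, Matrix.mul_smul, smul_smul, smul_smul, smul_smul]
          ring_nf
  · have hef : eM * fM = ((η * phi)⁻¹ * phi) • Matrix.diagonal (fun m => d (m + 1)) := by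
      rw [he', hf, smul_mul_assoc, Matrix.mul_smul, smul_smul, Matrix.mul_assoc, diagP,
        ← Matrix.mul_assoc, PPinv, Matrix.one_mul]
    have hfe : fM * eM = ((η * phi)⁻¹ * phi) • Matrix.diagonal d := by
      rw [he', hf, smul_mul_assoc, Matrix.mul_smul, smul_smul, ← Matrix.mul_assoc, PP,
        Matrix.one_mul, mul_comm]
    rw [hef, hfe, hk, hkinv, hQ, hQi]
    ext m j
    simp only [Matrix.add_apply, Matrix.sub_apply, Matrix.smul_apply, Matrix.diagonal_apply,
      smul_eq_mul]
    split_ifs with hij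
    case neg => ring
    subst hij
    have e1 : (q⁻¹) ^ (((m + 1) : Fin L) : ℕ) = q⁻¹ * (q⁻¹) ^ (m : ℕ) := powShift hL1 _ hqiL m
    have e2 : q ^ (((m + 1) : Fin L) : ℕ) = q * q ^ (m : ℕ) := powShift hL1 _ hqL m
    have e3 : (-1 : ℂ) ^ (((m + 1) : Fin L) : ℕ) = -1 * (-1 : ℂ) ^ (m : ℕ) :=
      powShift hL1 _ hn1L m
    simp only [hd, hdQ, hdQi, e1, e2, e3]
    generalize (q⁻¹ : ℂ) ^ (m : ℕ) = X
    generalize (q : ℂ) ^ (m : ℕ) = Y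
    generalize ((-1 : ℂ)) ^ (m : ℕ) = S
    have h1 : sq * q⁻¹ = sq⁻¹ := by
      rw [← hsq, pow_two, mul_inv, ← mul_assoc, mul_inv_cancel₀ hsq0, one_mul]
    have h2 : sq⁻¹ * q = sq := by
      rw [← hsq, pow_two, ← mul_assoc, inv_mul_cancel₀ hsq0, one_mul]
    have key : (sq * lam * (q⁻¹ * X) - sq⁻¹ * lam⁻¹ * (q * Y) - sigma * (-1 * S))
        + (sq * lam * X - sq⁻¹ * lam⁻¹ * Y - sigma * S)
        = (sq + sq⁻¹) * (lam * X - lam⁻¹ * Y) := by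
      linear_combination (lam * X) * h1 - (lam⁻¹ * Y) * h2
    have hc : (η * phi)⁻¹ * phi = (sq + sq⁻¹)⁻¹ * (q - q⁻¹)⁻¹ := by
      rw [hη, mul_inv, mul_inv, mul_assoc, inv_mul_cancel₀ hphi, mul_one]
    have hA : (sq + sq⁻¹)⁻¹ * (sq + sq⁻¹) = 1 := inv_mul_cancel₀ hss
    rw [hc]
    linear_combination ((sq + sq⁻¹)⁻¹ * (q - q⁻¹)⁻¹) * key
      + ((q - q⁻¹)⁻¹ * (lam * X - lam⁻¹ * Y)) * hA
end
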